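/- In the free algebra C⟨x,y⟩, let S be the ideal generated by xy + yx, x² + x³ + y², x³y, and x⁵. Then the quotient C⟨x,y⟩/S has dimension at most 8 as a complex vector space, spanned by the images of 1, x, x², x³, x⁴, y, xy, x²y. -/

import Mathlib

/-!
Modulo `S`, the span of the eight monomials contains `1` and is stable under left multiplication
by `x` and by `y`: the relations rewrite `y * m`, for each monomial `m`, as a combination of
monomials (for instance `y x²y = x²y² = -x⁴ - x⁵ = -x⁴`). A subspace that contains `1` and is
stable under left multiplication by a set of algebra generators is the whole algebra.
-/

open Submodule

variable {R A : Type*}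

theorem Submodule.span_eq_top_of_mul_mem [CommSemiring R] [Semiring A] [Algebra R A]
    {s B : Set A} (hs : Algebra.adjoin R s = ⊤) (h1 : 1 ∈ span R B)
    (hmul : ∀ g ∈ s, ∀ b ∈ B, g * b ∈ span R B) : span R B = ⊤ := by
  have mul_span : ∀ g ∈ s, ∀ v ∈ span R B, g * v ∈ span R B := fun g hg v hv =>
    (span_le (p := (span R B).comap (LinearMap.mulLeft R g)) |>.mpr (hmul g hg)) hv
  have mul_adjoin : ∀ a ∈ Algebra.adjoin R s, ∀ v ∈ span R B, a * v ∈ span R B := by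
    intro a ha
    induction ha using Algebra.adjoin_induction with
    | mem g hg => exact mul_span g hg
    | algebraMap r => exact fun v hv => Algebra.smul_def r v ▸ smul_mem _ r hv
    | add a b _ _ ha hb => exact fun v hv => add_mul a b v ▸ add_mem (ha v hv) (hb v hv)
    | mul a b _ _ ha hb => exact fun v hv => (mul_assoc a b v).symm ▸ ha _ (hb v hv)
  refine eq_top_iff.mpr fun a _ => ?_
  simpa using mul_adjoin a (hs ▸ Algebra.mem_top) 1 h1

theorem span_monomials_eq_top [CommRing R] [Ring A] [Algebra R A] {X Y : A}
    (hgen : Algebra.adjoin R {X, Y} = ⊤) (h1 : X * Y + Y * X = 0)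
    (h2 : X ^ 2 + X ^ 3 + Y ^ 2 = 0) (h3 : X ^ 3 * Y = 0) (h5 : X ^ 5 = 0) :
    span R (Set.range ![1, X, X ^ 2, X ^ 3, X ^ 4, Y, X * Y, X ^ 2 * Y]) = ⊤ := by
  simp only [Matrix.range_cons, Matrix.range_empty, Set.union_empty, Set.singleton_union]
  set N := span R {1, X, X ^ 2, X ^ 3, X ^ 4, Y, X * Y, X ^ 2 * Y}
  have mem {a : A} (ha : a ∈ ({1, X, X ^ 2, X ^ 3, X ^ 4, Y, X * Y, X ^ 2 * Y} : Set A)) :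
      a ∈ N := subset_span ha
  have yx : Y * X = -(X * Y) := by linear_combination (norm := noncomm_ring) h1
  have yx2 : Y * X ^ 2 = X ^ 2 * Y := by
    linear_combination (norm := noncomm_ring) h1 * X - X * h1
  have yx3 : Y * X ^ 3 = 0 := by
    linear_combination (norm := noncomm_ring) h1 * X ^ 2 - X * h1 * X + X ^ 2 * h1 - h3
  have yx4 : Y * X ^ 4 = 0 := by
    linear_combination (norm := noncomm_ring)
      h1 * X ^ 3 - X * h1 * X ^ 2 + X ^ 2 * h1 * X - X ^ 3 * h1 + X * h3
  have yy : Y * Y = -X ^ 2 - X ^ 3 := by linear_combination (norm := noncomm_ring) h2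
  have yxy : Y * (X * Y) = X ^ 3 + X ^ 4 := by
    linear_combination (norm := noncomm_ring) h1 * Y - X * h2
  have yx2y : Y * (X ^ 2 * Y) = -X ^ 4 := by
    linear_combination (norm := noncomm_ring) h1 * X * Y - X * h1 * Y + X ^ 2 * h2 - h5
  refine span_eq_top_of_mul_mem hgen (mem (by simp)) ?_
  rintro g (rfl | rfl) b hb
  · rcases hb with rfl | rfl | rfl | rfl | rfl | rfl | rfl | rfl
    · rw [mul_one]; exact mem (by simp)
    · rw [← sq]; exact mem (by simp)
    · rw [← pow_succ']; exact mem (by simp)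
    · rw [← pow_succ']; exact mem (by simp)
    · rw [← pow_succ', h5]; exact zero_mem N
    · exact mem (by simp)
    · rw [← mul_assoc, ← sq]; exact mem (by simp)
    · rw [← mul_assoc, ← pow_succ', h3]; exact zero_mem N
  · rcases hb with rfl | rfl | rfl | rfl | rfl | rfl | rfl | rfl
    · rw [mul_one]; exact mem (by simp)
    · rw [yx]; exact neg_mem (mem (by simp))
    · rw [yx2]; exact mem (by simp)
    · rw [yx3]; exact zero_mem N
    · rw [yx4]; exact zero_mem N
    · rw [yy]; exact sub_mem (neg_mem (mem (by simp))) (mem (by simp))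
    · rw [yxy]; exact add_mem (mem (by simp)) (mem (by simp))
    · rw [yx2y]; exact neg_mem (mem (by simp))

theorem stmt_12 (x y : FreeAlgebra ℂ (Fin 2))
    (hx : x = FreeAlgebra.ι ℂ 0) (hy : y = FreeAlgebra.ι ℂ 1)
    (S : TwoSidedIdeal (FreeAlgebra ℂ (Fin 2)))
    (hS : S = TwoSidedIdeal.span
      {x * y + y * x, x ^ 2 + x ^ 3 + y ^ 2, x ^ 3 * y, x ^ 5}) :
    ∀ r : FreeAlgebra ℂ (Fin 2), ∃ c : Fin 8 → ℂ,
      r - ∑ i, c i • (![1, x, x ^ 2, x ^ 3, x ^ 4, y, x * y, x ^ 2 * y] i) ∈ S := by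
  intro r
  let π := S.ringCon.mkₐ ℂ
  have π_eq_iff (a b) : π a = π b ↔ a - b ∈ S := (RingCon.eq _).trans (S.rel_iff a b)
  have rel : ∀ a ∈ ({x * y + y * x, x ^ 2 + x ^ 3 + y ^ 2, x ^ 3 * y, x ^ 5} : Set _),
      π a = 0 := fun a ha => by
    rw [← map_zero π, π_eq_iff, sub_zero, hS]
    exact TwoSidedIdeal.subset_span ha
  simp only [Set.forall_mem_insert, Set.mem_singleton_iff, forall_eq, map_add, map_mul,
    map_pow] at rel
  obtain ⟨h1, h2, h3, h5⟩ := rel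
  have hgen : Algebra.adjoin ℂ {π x, π y} = ⊤ := by
    have hxy : ({x, y} : Set _) = Set.range (FreeAlgebra.ι ℂ) := by
      ext; simp [hx, hy, Fin.exists_fin_two, eq_comm]
    rw [← Set.image_pair, ← AlgHom.map_adjoin, hxy, FreeAlgebra.adjoin_range_ι, Algebra.map_top,
      RingCon.range_mkₐ]
  have hspan := span_monomials_eq_top hgen h1 h2 h3 h5
  obtain ⟨c, hc⟩ := (mem_span_range_iff_exists_fun ℂ).mp (hspan ▸ mem_top : π r ∈ _)
  refine ⟨c, (π_eq_iff _ _).mp ?_⟩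
  simp [← hc, Fin.sum_univ_succ]
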